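/- arXiv:1303.4684 — 7 statements merged into one kernel-verified Lean document; each statement's English description precedes it below -/
import Mathlib

section
/- Let S ⊆ [0,1] be a meager set. Then there exists a homeomorphism φ : [0,1] → [0,1] such that the image φ(S) is FAP. -/
/-!
Cover `S` by an increasing sequence of closed nowhere dense sets `Fₙ`. Among the homeomorphisms
of `[0, 1]`, those mapping `Fₙ` onto a set containing a 3-AP of step at least `δ` form a closed
set, by compactness. Its complement is dense: composing with an order automorphism close to the
identity, which squeezes the nowhere dense image of `Fₙ` into tiny neighbourhoods of a finite grid
that is quantitatively far from containing 3-APs, destroys all such progressions. By the Baire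
category theorem some homeomorphism avoids all these closed nowhere dense sets, and it maps `S`
onto an AP-free set.
-/

open Set

noncomputable section

/-- `A ⊆ ℝ` is *FAP* (free of arithmetic progressions): it contains no 3-term AP. -/
def FAP (A : Set ℝ) : Prop :=
  ¬ ∃ x d : ℝ, 0 < d ∧ x ∈ A ∧ x + d ∈ A ∧ x + 2 * d ∈ A

/-- `A ⊆ ℝ` is *RAP* (rich in arithmetic progressions): it contains APs of every length `n ≥ 3`. -/
def RAP (A : Set ℝ) : Prop :=
  ∀ n : ℕ, 3 ≤ n → ∃ x d : ℝ, 0 < d ∧ ∀ k : ℕ, k < n → x + (k : ℝ) * d ∈ A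

/-- The image in `ℝ` of a set `S ⊆ [0,1]` under a homeomorphism `φ : [0,1] → [0,1]`. -/
def imgH (φ : Set.Icc (0:ℝ) 1 ≃ₜ Set.Icc (0:ℝ) 1) (S : Set ℝ) : Set ℝ :=
  Subtype.val '' (⇑φ '' (Subtype.val ⁻¹' S))

def APFreeAtScale (A : Set ℝ) (δ : ℝ) : Prop :=
  ¬ ∃ x d : ℝ, δ ≤ d ∧ x ∈ A ∧ x + d ∈ A ∧ x + 2 * d ∈ A

namespace APFreeAtScale

variable {A B : Set ℝ} {δ : ℝ}

lemma mono (h : APFreeAtScale B δ) (hAB : A ⊆ B) : APFreeAtScale A δ :=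
  fun ⟨x, d, hd, h₀, h₁, h₂⟩ => h ⟨x, d, hd, hAB h₀, hAB h₁, hAB h₂⟩

lemma iUnion_of_monotone {A : ℕ → Set ℝ} (hA : Monotone A) (h : ∀ n, APFreeAtScale (A n) δ) :
    APFreeAtScale (⋃ n, A n) δ := by
  rintro ⟨x, d, hd, h₀, h₁, h₂⟩
  obtain ⟨n₀, h₀⟩ := mem_iUnion.mp h₀
  obtain ⟨n₁, h₁⟩ := mem_iUnion.mp h₁
  obtain ⟨n₂, h₂⟩ := mem_iUnion.mp h₂
  have hle : ∀ i, i ≤ n₀ + n₁ + n₂ → A i ⊆ A (n₀ + n₁ + n₂) := fun i hi => hA hi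
  exact h (n₀ + n₁ + n₂)
    ⟨x, d, hd, hle n₀ (by omega) h₀, hle n₁ (by omega) h₁, hle n₂ (by omega) h₂⟩

lemma image_iff {α : Type*} (g : α → ℝ) (s : Set α) :
    APFreeAtScale (g '' s) δ ↔
      ∀ a ∈ s, ∀ b ∈ s, ∀ c ∈ s, g a + g c = 2 * g b → g b - g a < δ := by
  constructor
  · intro h a ha b hb c hc habc
    by_contra! hδ
    exact h ⟨g a, g b - g a, hδ, mem_image_of_mem g ha, by simpa using mem_image_of_mem g hb,
      by convert mem_image_of_mem g hc using 1; linarith⟩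
  · rintro h ⟨x, d, hd, ⟨a, ha, rfl⟩, ⟨b, hb, hab⟩, ⟨c, hc, hac⟩⟩
    have := h a ha b hb c hc (by linarith)
    linarith

lemma of_forall_near {C : Set ℝ} {ρ : ℝ} (hA : ∀ a ∈ A, ∃ c ∈ C, |a - c| ≤ ρ)
    (hC : ∀ a ∈ C, ∀ b ∈ C, ∀ c ∈ C, a ≠ b → 4 * ρ < |a + c - 2 * b|) (hδ : 2 * ρ < δ) :
    APFreeAtScale A δ := by
  rintro ⟨x, d, hd, h₀, h₁, h₂⟩
  obtain ⟨a, ha, hxa⟩ := hA _ h₀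
  obtain ⟨b, hb, hxb⟩ := hA _ h₁
  obtain ⟨c, hc, hxc⟩ := hA _ h₂
  rw [abs_le] at hxa hxb hxc
  by_cases hab : a = b
  · subst hab
    linarith
  · have := hC a ha b hb c hc hab
    rw [lt_abs] at this
    rcases this with h | h <;> linarith

end APFreeAtScale

lemma fap_of_forall_apFreeAtScale {A : Set ℝ} (h : ∀ k : ℕ, APFreeAtScale A (1 / (k + 1))) :
    FAP A := by
  rintro ⟨x, d, hd, hA⟩
  obtain ⟨k, hk⟩ := exists_nat_one_div_lt hd
  exact h k ⟨x, d, hk.le, hA⟩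

lemma eq_of_quadratic_add_eq_two_mul {N M i j k : ℕ} (hM : 2 * N ^ 2 < M) (hi : i ≤ N)
    (hj : j ≤ N) (hk : k ≤ N)
    (h : M * i + i ^ 2 + (M * k + k ^ 2) = 2 * (M * j + j ^ 2)) : i = j := by
  zify at hM hi hj hk h ⊢
  rcases lt_trichotomy ((i : ℤ) + k) (2 * j) with hlt | heq | hgt
  · nlinarith
  · nlinarith [sq_nonneg ((i : ℤ) - k)]
  · nlinarith

/-- The grid `t j = P j / P N` with `P j = (2N² + 1) j + j²`: the dominant linear term keeps it
nearly uniform while the quadratic term destroys every 3-AP, and since the numerators are integers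
the defect of a non-progression is at least `1 / P N`. -/
lemma exists_apSeparated_grid {ε : ℝ} (hε : 0 < ε) :
    ∃ (N : ℕ) (t : ℕ → ℝ) (m : ℝ), StrictMono t ∧ t 0 = 0 ∧ t N = 1 ∧
      (∀ j < N, t (j + 1) - t j ≤ ε) ∧ 0 < m ∧
      ∀ i ≤ N, ∀ j ≤ N, ∀ k ≤ N, i ≠ j → m ≤ |t i + t k - 2 * t j| := by
  obtain ⟨N, hN⟩ := exists_nat_gt (2 / ε)
  have hN0 : 0 < N := by
    have : (0 : ℝ) < N := (div_pos two_pos hε).trans hN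
    exact_mod_cast this
  set M := 2 * N ^ 2 + 1
  set P : ℕ → ℕ := fun j => M * j + j ^ 2
  have hP : StrictMono P := fun i j hij => by
    simp only [P]
    nlinarith
  have hD : (0 : ℝ) < P N := Nat.cast_pos.mpr (by simpa [P] using hP hN0)
  refine ⟨N, fun j => P j / P N, 1 / P N, fun i j hij => ?_, by simp [P], div_self hD.ne',
    fun j hj => ?_, one_div_pos.mpr hD, fun i hi j hj k hk hij => ?_⟩
  · exact div_lt_div_of_pos_right (by exact_mod_cast hP hij) hD
  · have hstep : ((P (j + 1) - P j) * N : ℕ) ≤ 2 * P N := by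
      have : P (j + 1) - P j = M + 2 * j + 1 := by simp only [P]; ring_nf; omega
      rw [this]
      simp only [P, M]
      nlinarith
    have hstep' : ((P (j + 1) : ℝ) - P j) * N ≤ 2 * P N := by
      rw [← Nat.cast_sub (hP (Nat.lt_succ_self j)).le]
      exact_mod_cast hstep
    calc (P (j + 1) : ℝ) / P N - P j / P N = (P (j + 1) - P j) / P N := by ring
      _ ≤ 2 / N := by
        rw [div_le_div_iff₀ hD (by exact_mod_cast hN0)]
        linarith
      _ ≤ ε := by
        rw [div_le_iff₀ (by exact_mod_cast hN0)]
        rw [div_lt_iff₀ hε] at hN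
        linarith
  · have hz : (P i + P k : ℤ) - 2 * P j ≠ 0 := by
      intro h
      refine hij (eq_of_quadratic_add_eq_two_mul (N := N) (M := M) (k := k) (by omega) hi hj hk ?_)
      simp only [P] at h
      omega
    have hcast : (P i : ℝ) / P N + P k / P N - 2 * (P j / P N) =
        (((P i + P k : ℤ) - 2 * P j : ℤ) : ℝ) / P N := by
      push_cast
      ring
    show _ ≤ |(P i : ℝ) / P N + P k / P N - 2 * (P j / P N)|
    rw [hcast, abs_div, abs_of_pos hD]
    gcongr
    exact_mod_cast Int.one_le_abs hz

lemma OrderIso.exists_eq_on_Iic_apply_eq (e : ℝ ≃o ℝ) {a x y : ℝ} (hax : a < x) (hy : e a < y) :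
    ∃ e' : ℝ ≃o ℝ, (∀ z ≤ a, e' z = e z) ∧ e' x = y := by
  set k := (y - e a) / (x - a)
  have hk : 0 < k := div_pos (sub_pos.2 hy) (sub_pos.2 hax)
  set g : ℝ → ℝ := fun z => if z ≤ a then e z else e a + k * (z - a)
  have hg_right : ∀ z, a ≤ z → g z = e a + k * (z - a) := by
    intro z hz
    rcases hz.eq_or_lt with rfl | hz
    · simp [g]
    · simp [g, not_le.2 hz]
  have hg_mono : StrictMono g := by
    refine StrictMonoOn.Iic_union_Ici (a := a) (fun z hz w hw hzw => ?_) (fun z hz w hw hzw => ?_)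
    · simpa [g, show z ≤ a from hz, show w ≤ a from hw] using hzw
    · rw [hg_right z hz, hg_right w hw]
      gcongr
  have hg_surj : Function.Surjective g := by
    intro w
    rcases le_or_gt w (e a) with hw | hw
    · refine ⟨e.symm w, ?_⟩
      have : e.symm w ≤ a := by simpa using e.symm.monotone hw
      simp [g, this]
    · refine ⟨a + (w - e a) / k, ?_⟩
      rw [hg_right _ (le_add_of_nonneg_right (div_pos (sub_pos.2 hw) hk).le)]
      field_simp
      ring
  refine ⟨StrictMono.orderIsoOfSurjective g hg_mono hg_surj, fun z hz => ?_, ?_⟩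
  · simp [g, hz]
  · simp only [StrictMono.coe_orderIsoOfSurjective]
    rw [hg_right x hax.le, div_mul_cancel₀ _ (sub_pos.2 hax).ne']
    ring

lemma exists_orderIso_cells {t x y : ℕ → ℝ} {ρ : ℝ} (ht : Monotone t) (hx : ∀ j, t j < x j)
    (hxy : ∀ j, x j < y j) (hy : ∀ j, y j < t (j + 1)) (hρ : 0 < ρ) (n : ℕ)
    (hsp : ∀ j < n, 2 * ρ < t (j + 1) - t j) :
    ∃ e : ℝ ≃o ℝ, (∀ j ≤ n, e (t j) = t j) ∧ (∀ j < n, e (x j) = t j + ρ) ∧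
      ∀ j < n, e (y j) = t (j + 1) - ρ := by
  induction n with
  | zero => exact ⟨OrderIso.refl ℝ, by simp, by simp, by simp⟩
  | succ n ih =>
    obtain ⟨e, het, hex, hey⟩ := ih fun j hj => hsp j (by omega)
    have hsp_n := hsp n (by omega)
    obtain ⟨e₁, he₁, he₁x⟩ := e.exists_eq_on_Iic_apply_eq (y := t n + ρ) (hx n)
      (by rw [het n le_rfl]; linarith)
    obtain ⟨e₂, he₂, he₂y⟩ := e₁.exists_eq_on_Iic_apply_eq (y := t (n + 1) - ρ) (hxy n)
      (by rw [he₁x]; linarith)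
    obtain ⟨e₃, he₃, he₃t⟩ := e₂.exists_eq_on_Iic_apply_eq (y := t (n + 1)) (hy n)
      (by rw [he₂y]; linarith)
    have hold : ∀ z ≤ t n, e₃ z = e z := fun z hz => by
      rw [he₃ z (by linarith [hx n, hxy n]), he₂ z (by linarith [hx n]), he₁ z hz]
    have hx_le : ∀ j < n, x j ≤ t n := fun j hj =>
      ((hxy j).trans (hy j)).le.trans (ht (by omega))
    have hy_le : ∀ j < n, y j ≤ t n := fun j hj => (hy j).le.trans (ht (by omega))
    refine ⟨e₃, fun j hj => ?_, fun j hj => ?_, fun j hj => ?_⟩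
    · rcases Nat.lt_succ_iff_lt_or_eq.mp (Nat.lt_succ_of_le hj) with hj | rfl
      · rw [hold _ (ht (by omega)), het j (by omega)]
      · exact he₃t
    · rcases Nat.lt_succ_iff_lt_or_eq.mp hj with hj | rfl
      · rw [hold _ (hx_le j hj), hex j hj]
      · rw [he₃ _ (hxy j).le, he₂ _ le_rfl, he₁x]
    · rcases Nat.lt_succ_iff_lt_or_eq.mp hj with hj | rfl
      · rw [hold _ (hy_le j hj), hey j hj]
      · rw [he₃ _ le_rfl, he₂y]

lemma Monotone.exists_mem_Icc_succ {t : ℕ → ℝ} (ht : Monotone t) {N : ℕ} (hN : 0 < N) {z : ℝ}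
    (hz : z ∈ Icc (t 0) (t N)) : ∃ j < N, z ∈ Icc (t j) (t (j + 1)) := by
  induction N with
  | zero => omega
  | succ n ih =>
    rcases le_or_gt z (t n) with h | h
    · rcases n.eq_zero_or_pos with rfl | hn
      · exact ⟨0, Nat.one_pos, hz.1, h.trans (ht zero_le_one)⟩
      · obtain ⟨j, hj, hjz⟩ := ih hn ⟨hz.1, h⟩
        exact ⟨j, by omega, hjz⟩
    · exact ⟨n, Nat.lt_succ_self n, h.le, hz.2⟩

lemma IsNowhereDense.exists_Ioo_disjoint {K : Set ℝ} (hK : IsNowhereDense K) {a b : ℝ}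
    (hab : a < b) : ∃ x y, a < x ∧ x < y ∧ y < b ∧ Disjoint (Ioo x y) K := by
  obtain ⟨w, hw, hwK⟩ : (Ioo a b \ closure K).Nonempty := by
    rw [sdiff_nonempty]
    intro h
    have := interior_mono h
    rw [hK, interior_Ioo] at this
    exact (nonempty_Ioo.mpr hab).ne_empty (subset_empty_iff.mp this)
  obtain ⟨l, u, ⟨hl, hu⟩, hsub⟩ := mem_nhds_iff_exists_Ioo_subset.mp
    ((isOpen_Ioo.sdiff isClosed_closure).mem_nhds ⟨hw, hwK⟩)
  have hmem : ∀ z, l < z → z < u → z ∈ Ioo a b ∧ z ∉ closure K := fun z h₁ h₂ => hsub ⟨h₁, h₂⟩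
  refine ⟨(l + w) / 2, (w + u) / 2, (hmem _ (by linarith) (by linarith)).1.1, by linarith,
    (hmem _ (by linarith) (by linarith)).1.2, ?_⟩
  rw [disjoint_iff_forall_ne]
  rintro z ⟨hz₁, hz₂⟩ _ hzK rfl
  exact (hmem z (by linarith) (by linarith)).2 (subset_closure hzK)

theorem exists_orderIso_near_id_apFreeAtScale_image {K : Set ℝ} (hK : IsNowhereDense K)
    (hK01 : K ⊆ Icc 0 1) {ε δ : ℝ} (hε : 0 < ε) (hδ : 0 < δ) :
    ∃ e : ℝ ≃o ℝ, e 0 = 0 ∧ e 1 = 1 ∧ (∀ z ∈ Icc (0 : ℝ) 1, |e z - z| ≤ ε) ∧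
      APFreeAtScale (e '' K) δ := by
  obtain ⟨N, t, m, ht, ht0, htN, hmesh, hm, hsep⟩ := exists_apSeparated_grid hε
  have hN : 0 < N := Nat.pos_of_ne_zero fun h => by subst h; linarith
  choose x y hx hxy hy hgap using fun j => hK.exists_Ioo_disjoint (ht (Nat.lt_succ_self j))
  set ρ := min (δ / 3) (m / 5)
  have hρ : 0 < ρ := lt_min (by linarith) (by linarith)
  have hρδ : ρ ≤ δ / 3 := min_le_left _ _
  have hρm : ρ ≤ m / 5 := min_le_right _ _
  have hsp : ∀ j < N, 2 * ρ < t (j + 1) - t j := fun j hj => by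
    have := hsep (j + 1) hj j (by omega) j (by omega) (by omega)
    rw [show t (j + 1) + t j - 2 * t j = t (j + 1) - t j by ring,
      abs_of_pos (sub_pos.2 (ht (Nat.lt_succ_self j)))] at this
    linarith
  obtain ⟨e, het, hex, hey⟩ := exists_orderIso_cells ht.monotone hx hxy hy hρ N hsp
  have hcell : ∀ z ∈ Icc (0 : ℝ) 1, ∃ j < N, z ∈ Icc (t j) (t (j + 1)) ∧
      e z ∈ Icc (t j) (t (j + 1)) := fun z hz => by
    obtain ⟨j, hj, hzj⟩ := ht.monotone.exists_mem_Icc_succ hN (by rwa [ht0, htN])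
    refine ⟨j, hj, hzj, ?_, ?_⟩
    · simpa [het j hj.le] using e.monotone hzj.1
    · simpa [het (j + 1) hj] using e.monotone hzj.2
  refine ⟨e, by simpa [ht0] using het 0 (Nat.zero_le N), by simpa [htN] using het N le_rfl,
    fun z hz => ?_, ?_⟩
  · obtain ⟨j, hj, hz, hez⟩ := hcell z hz
    have := hmesh j hj
    rw [abs_le]
    constructor <;> linarith [hz.1, hz.2, hez.1, hez.2]
  · refine APFreeAtScale.of_forall_near (C := t '' Iic N) ?_ ?_ (by linarith)
    · rintro _ ⟨z, hzK, rfl⟩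
      obtain ⟨j, hj, hz, hez⟩ := hcell z (hK01 hzK)
      rcases le_or_gt z (x j) with hzx | hxz
      · have := e.monotone hzx
        refine ⟨t j, mem_image_of_mem t (show j ≤ N by omega), abs_le.mpr ⟨?_, ?_⟩⟩ <;>
          linarith [hex j hj, hez.1]
      · have hyz : y j ≤ z := not_lt.mp fun hzy => disjoint_left.mp (hgap j) ⟨hxz, hzy⟩ hzK
        have := e.monotone hyz
        refine ⟨t (j + 1), mem_image_of_mem t (show j + 1 ≤ N by omega), abs_le.mpr ⟨?_, ?_⟩⟩ <;>
          linarith [hey j hj, hez.2]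
    · rintro _ ⟨i, hi, rfl⟩ _ ⟨j, hj, rfl⟩ _ ⟨k, hk, rfl⟩ hij
      linarith [hsep i hi j hj k hk fun h => hij (h ▸ rfl)]

/-- Homeomorphisms `φ` of `X` as the pairs `(φ, φ⁻¹)`: for compact metric `X` these form a closed,
hence complete, subset of `C(X, X) × C(X, X)`, so the Baire category theorem applies. -/
def homeomorphPairs (X : Type*) [TopologicalSpace X] : Set (C(X, X) × C(X, X)) :=
  {p | p.2.comp p.1 = ContinuousMap.id X ∧ p.1.comp p.2 = ContinuousMap.id X}

namespace homeomorphPairs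

variable {X : Type*}

section Topological

variable [TopologicalSpace X]

def toHomeomorph (p : homeomorphPairs X) : X ≃ₜ X where
  toFun := p.1.1
  invFun := p.1.2
  left_inv x := DFunLike.congr_fun p.2.1 x
  right_inv x := DFunLike.congr_fun p.2.2 x
  continuous_toFun := p.1.1.continuous
  continuous_invFun := p.1.2.continuous

def ofHomeomorph (φ : X ≃ₜ X) : homeomorphPairs X :=
  ⟨(φ, φ.symm), by ext; simp, by ext; simp⟩

@[simp]
lemma toHomeomorph_ofHomeomorph (φ : X ≃ₜ X) : toHomeomorph (ofHomeomorph φ) = φ := rfl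

instance : Nonempty (homeomorphPairs X) := ⟨ofHomeomorph (Homeomorph.refl X)⟩

end Topological

variable [MetricSpace X] [CompactSpace X]

lemma isClosed : IsClosed (homeomorphPairs X) := by
  have hswap : Continuous fun p : C(X, X) × C(X, X) => p.1.comp p.2 :=
    ContinuousMap.continuous_comp'.comp continuous_swap
  exact (isClosed_eq ContinuousMap.continuous_comp' continuous_const).inter
    (isClosed_eq hswap continuous_const)

instance : CompleteSpace (homeomorphPairs X) := isClosed.completeSpace_coe

lemma exists_dist_ofHomeomorph_trans_lt (φ : X ≃ₜ X) {r : ℝ} (hr : 0 < r) :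
    ∃ ε > 0, ∀ γ : X ≃ₜ X, (∀ x, dist (γ x) x ≤ ε) →
      dist (ofHomeomorph (φ.trans γ)) (ofHomeomorph φ) < r := by
  obtain ⟨η, hη, hφ⟩ := Metric.uniformContinuous_iff.mp
    (CompactSpace.uniformContinuous_of_continuous φ.symm.continuous) (r / 2) (half_pos hr)
  refine ⟨min (r / 2) (η / 2), lt_min (half_pos hr) (half_pos hη), fun γ hγ => ?_⟩
  rw [Subtype.dist_eq, Prod.dist_eq]
  refine max_lt ((ContinuousMap.dist_lt_iff hr).mpr fun x => ?_)
    ((ContinuousMap.dist_lt_iff hr).mpr fun x => ?_)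
  · exact (hγ (φ x)).trans_lt ((min_le_left _ _).trans_lt (half_lt_self hr))
  · have : dist (γ.symm x) x < η := by
      rw [dist_comm]
      simpa using (hγ (γ.symm x)).trans_lt ((min_le_right _ _).trans_lt (half_lt_self hη))
    exact (hφ this).trans (half_lt_self hr)

end homeomorphPairs

lemma IsNowhereDense.union {X : Type*} [TopologicalSpace X] {s t : Set X}
    (hs : IsNowhereDense s) (ht : IsNowhereDense t) : IsNowhereDense (s ∪ t) := by
  have hs' := isClosed_isNowhereDense_iff_compl.mp ⟨isClosed_closure, hs.closure⟩
  have ht' := isClosed_isNowhereDense_iff_compl.mp ⟨isClosed_closure, ht.closure⟩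
  rw [IsNowhereDense, closure_union, interior_eq_empty_iff_dense_compl, compl_union]
  exact hs'.2.inter_of_isOpen_left ht'.2 hs'.1

lemma IsMeagre.exists_monotone_subset_iUnion {X : Type*} [TopologicalSpace X] {s : Set X}
    (hs : IsMeagre s) : ∃ F : ℕ → Set X, Monotone F ∧ (∀ n, IsClosed (F n)) ∧
      (∀ n, IsNowhereDense (F n)) ∧ s ⊆ ⋃ n, F n := by
  obtain ⟨S, hSnd, hS, hsS⟩ := isMeagre_iff_countable_union_isNowhereDense.mp hs
  obtain ⟨g, hg⟩ := (hS.insert ∅).exists_eq_range (insert_nonempty _ _)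
  have hgS : ∀ t ∈ S, ∃ i, g i = t := fun t ht => by
    rw [← mem_range, ← hg]
    exact mem_insert_of_mem ∅ ht
  have hgnd : ∀ i, IsNowhereDense (closure (g i)) := fun i => by
    have : g i ∈ insert ∅ S := hg ▸ mem_range_self i
    rcases this with h | h
    · simp [h]
    · exact (hSnd _ h).closure
  refine ⟨accumulate (fun i => closure (g i)), monotone_accumulate, fun n => ?_, fun n => ?_, ?_⟩
  · induction n with
    | zero => simp [accumulate_zero_nat]
    | succ n ih => simpa [accumulate_succ] using ih.union isClosed_closure
  · induction n with
    | zero => simpa [accumulate_zero_nat] using hgnd 0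
    | succ n ih => simpa [accumulate_succ] using ih.union (hgnd (n + 1))
  · rw [iUnion_accumulate]
    intro z hz
    obtain ⟨t, ht, hzt⟩ := hsS hz
    obtain ⟨i, rfl⟩ := hgS t ht
    exact mem_iUnion.mpr ⟨i, subset_closure hzt⟩

lemma IsNowhereDense.preimage_coe {X : Type*} [TopologicalSpace X] {Y s : Set X}
    (hY : Y ⊆ closure (interior Y)) (hs : IsNowhereDense s) :
    IsNowhereDense ((↑) ⁻¹' s : Set Y) := by
  refine IsNowhereDense.mono (preimage_mono subset_closure) ?_
  have hU := (isClosed_isNowhereDense_iff_compl.mp ⟨isClosed_closure, hs.closure⟩)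
  rw [(isClosed_closure.preimage continuous_subtype_val).isNowhereDense_iff,
    interior_eq_empty_iff_dense_compl, ← preimage_compl, Subtype.dense_iff,
    Subtype.image_preimage_coe]
  calc Y ⊆ closure (interior Y) := hY
    _ ⊆ closure (closure (interior Y ∩ (closure s)ᶜ)) :=
      closure_mono (hU.2.open_subset_closure_inter isOpen_interior)
    _ ⊆ closure (Y ∩ (closure s)ᶜ) := by
      rw [closure_closure]
      exact closure_mono (inter_subset_inter_left _ interior_subset)

def OrderIso.homeomorphIcc (e : ℝ ≃o ℝ) {a b : ℝ} (ha : e a = a) (hb : e b = b) :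
    Icc a b ≃ₜ Icc a b :=
  e.toHomeomorph.sets (by
    rw [OrderIso.coe_toHomeomorph, OrderIso.preimage_Icc, e.symm_apply_eq.mpr ha.symm,
      e.symm_apply_eq.mpr hb.symm])

@[simp]
lemma OrderIso.coe_homeomorphIcc_apply (e : ℝ ≃o ℝ) {a b : ℝ} (ha : e a = a) (hb : e b = b)
    (x : Icc a b) : (e.homeomorphIcc ha hb x : ℝ) = e x :=
  rfl

section imgH

variable (φ : Icc (0 : ℝ) 1 ≃ₜ Icc (0 : ℝ) 1)

lemma imgH_eq_image (F : Set ℝ) : imgH φ F = (fun x => (φ x : ℝ)) '' (Subtype.val ⁻¹' F) :=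
  image_image _ _ _

lemma imgH_subset_Icc (F : Set ℝ) : imgH φ F ⊆ Icc 0 1 := by
  rintro _ ⟨x, -, rfl⟩
  exact x.2

lemma imgH_mono {F G : Set ℝ} (h : F ⊆ G) : imgH φ F ⊆ imgH φ G :=
  image_mono (image_mono (preimage_mono h))

lemma imgH_iUnion (F : ℕ → Set ℝ) : imgH φ (⋃ n, F n) = ⋃ n, imgH φ (F n) := by
  simp only [imgH, preimage_iUnion, image_iUnion]

lemma IsNowhereDense.imgH {F : Set ℝ} (hF : IsNowhereDense F) : IsNowhereDense (imgH φ F) :=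
  (φ.isInducing.isNowhereDense_image (hF.preimage_coe (by
    rw [interior_Icc, closure_Ioo zero_ne_one]))).image_val

lemma imgH_trans_homeomorphIcc {e : ℝ ≃o ℝ} (h0 : e 0 = 0) (h1 : e 1 = 1) (F : Set ℝ) :
    imgH (φ.trans (e.homeomorphIcc h0 h1)) F = e '' imgH φ F := by
  simp only [imgH_eq_image, image_image, Homeomorph.trans_apply, OrderIso.coe_homeomorphIcc_apply]

end imgH

def badSet (F : Set ℝ) (δ : ℝ) : Set (homeomorphPairs (Icc (0 : ℝ) 1)) :=
  {p | ¬ APFreeAtScale (imgH (homeomorphPairs.toHomeomorph p) F) δ}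

lemma isClosed_badSet {F : Set ℝ} (hF : IsClosed F) (δ : ℝ) : IsClosed (badSet F δ) := by
  set I := Icc (0 : ℝ) 1
  set E : Set ((I × I × I) × homeomorphPairs I) :=
    {z | (z.1.1 : ℝ) ∈ F ∧ (z.1.2.1 : ℝ) ∈ F ∧ (z.1.2.2 : ℝ) ∈ F ∧
      (z.2.1.1 z.1.1 : ℝ) + z.2.1.1 z.1.2.2 = 2 * z.2.1.1 z.1.2.1 ∧
      δ ≤ (z.2.1.1 z.1.2.1 : ℝ) - z.2.1.1 z.1.1}
  have hE : IsClosed E := by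
    simp only [E, ofPred_and]
    refine (hF.preimage (by fun_prop)).inter ((hF.preimage (by fun_prop)).inter
      ((hF.preimage (by fun_prop)).inter ((isClosed_eq ?_ ?_).inter (isClosed_le ?_ ?_)))) <;>
    fun_prop
  have hbad : badSet F δ = Prod.snd '' E := by
    ext p
    simp only [badSet, imgH_eq_image, APFreeAtScale.image_iff]
    push Not
    constructor
    · rintro ⟨a, ha, b, hb, c, hc, habc⟩
      exact ⟨((a, b, c), p), ⟨ha, hb, hc, habc⟩, rfl⟩
    · rintro ⟨⟨⟨a, b, c⟩, q⟩, ⟨ha, hb, hc, habc⟩, rfl⟩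
      exact ⟨a, ha, b, hb, c, hc, habc⟩
  rw [hbad]
  exact isClosedMap_snd_of_compactSpace E hE

lemma dense_compl_badSet {F : Set ℝ} (hF : IsNowhereDense F) {δ : ℝ} (hδ : 0 < δ) :
    Dense (badSet F δ)ᶜ := by
  rw [Metric.dense_iff]
  intro p r hr
  set φ := homeomorphPairs.toHomeomorph p
  obtain ⟨ε, hε, hclose⟩ := homeomorphPairs.exists_dist_ofHomeomorph_trans_lt φ hr
  obtain ⟨e, he0, he1, he, hAP⟩ := exists_orderIso_near_id_apFreeAtScale_image (hF.imgH φ)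
    (imgH_subset_Icc φ F) hε hδ
  refine ⟨homeomorphPairs.ofHomeomorph (φ.trans (e.homeomorphIcc he0 he1)), ?_, ?_⟩
  · exact hclose _ fun x => by simpa [Subtype.dist_eq, Real.dist_eq] using he x x.2
  · simpa [badSet, imgH_trans_homeomorphIcc] using hAP

lemma exists_forall_notMem_badSet {F : ℕ → Set ℝ} (hFclosed : ∀ n, IsClosed (F n))
    (hFnd : ∀ n, IsNowhereDense (F n)) :
    ∃ p, ∀ n k : ℕ, p ∉ badSet (F n) (1 / (k + 1)) := by
  have hopen : ∀ nk : ℕ × ℕ, IsOpen (badSet (F nk.1) (1 / (nk.2 + 1)))ᶜ := fun nk =>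
    (isClosed_badSet (hFclosed nk.1) _).isOpen_compl
  have hdense : ∀ nk : ℕ × ℕ, Dense (badSet (F nk.1) (1 / (nk.2 + 1)))ᶜ := fun nk =>
    dense_compl_badSet (hFnd nk.1) Nat.one_div_pos_of_nat
  obtain ⟨p, hp⟩ := (dense_iInter_of_isOpen hopen hdense).nonempty
  exact ⟨p, fun n k => mem_iInter.mp hp (n, k)⟩

theorem meager_exists_homeomorph_FAP_general (S : Set ℝ)
    (hmeager : IsMeagre S) :
    ∃ φ : Set.Icc (0:ℝ) 1 ≃ₜ Set.Icc (0:ℝ) 1, FAP (imgH φ S) := by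
  obtain ⟨F, hFmono, hFclosed, hFnd, hSF⟩ := hmeager.exists_monotone_subset_iUnion
  obtain ⟨p, hp⟩ := exists_forall_notMem_badSet hFclosed hFnd
  set φ := homeomorphPairs.toHomeomorph p
  refine ⟨φ, fap_of_forall_apFreeAtScale fun k => ?_⟩
  have hgood : ∀ n, APFreeAtScale (imgH φ (F n)) (1 / (k + 1)) := fun n => not_not.mp (hp n k)
  refine (APFreeAtScale.iUnion_of_monotone (fun m n hmn => imgH_mono φ (hFmono hmn)) hgood).mono ?_
  rw [← imgH_iUnion]
  exact imgH_mono φ hSF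

/-- If `S ⊆ [0,1]` is meager then some homeomorphism of `[0,1]` maps `S` onto an AP-free set. -/
theorem meager_exists_homeomorph_FAP (S : Set ℝ) (hS : S ⊆ Set.Icc 0 1)
    (hmeager : IsMeagre S) :
    ∃ φ : Set.Icc (0:ℝ) 1 ≃ₜ Set.Icc (0:ℝ) 1, FAP (imgH φ S) :=
  meager_exists_homeomorph_FAP_general S hmeager
end
end

section
/- Let S ⊆ [0,1] be a Borel set that is not meager. Then for every homeomorphism φ : [0,1] → [0,1], the image φ(S) is RAP. -/
open Set

noncomputable section

/-!
A Borel set has the Baire property, so a non-meagre one is comeagre in some nonempty open set,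
and homeomorphisms of `[0,1]` preserve both properties. Hence `φ(S)` contains a nonempty open
set of reals up to a meagre set `M`. For a fixed step `d`, the starting points `x` with
`x + k d ∉ M` for all `k < n` form a residual, hence dense, set; so one of them lies close enough
to a point of that open set for the whole progression to stay inside it.
-/

open Filter Topology

theorem BaireMeasurableSet.exists_isOpen_nonempty_isMeagre_diff {X : Type*}
    [TopologicalSpace X] {s : Set X} (hs : BaireMeasurableSet s) (hns : ¬ IsMeagre s) :
    ∃ U : Set X, IsOpen U ∧ U.Nonempty ∧ IsMeagre (U \ s) := by
  obtain ⟨U, hU, hsU⟩ := hs.residualEq_isOpen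
  have hmem : ∀ᶠ x in residual X, x ∈ s ↔ x ∈ U := hsU.mem_iff
  refine ⟨U, hU, ?_, hmem.mono fun x hx hxd => hxd.2 (hx.2 hxd.1)⟩
  by_contra hU_empty
  rw [not_nonempty_iff_eq_empty] at hU_empty
  exact hns (hmem.mono fun x hx hxs => by simpa [hU_empty] using hx.1 hxs)

theorem interior_image_val_nonempty {X : Type*} [TopologicalSpace X] {s : Set X}
    (hs : s ⊆ closure (interior s)) {U : Set s} (hU : IsOpen U) (hne : U.Nonempty) :
    (interior (Subtype.val '' U)).Nonempty := by
  obtain ⟨O, hO, rfl⟩ := isOpen_induced_iff.mp hU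
  obtain ⟨u, hu⟩ := hne
  obtain ⟨x, hxO, hxs⟩ := mem_closure_iff.mp (hs u.2) O hO hu
  have hsub : O ∩ interior s ⊆ Subtype.val '' (Subtype.val ⁻¹' O) :=
    fun y hy => ⟨⟨y, interior_subset hy.2⟩, hy.1, rfl⟩
  exact ⟨x, interior_maximal hsub (hO.inter isOpen_interior) ⟨hxO, hxs⟩⟩

theorem eventually_residual_forall_add_mul_notMem {M : Set ℝ} (hM : IsMeagre M) (n : ℕ)
    (d : ℝ) : ∀ᶠ x in residual ℝ, ∀ k < n, x + k * d ∉ M := by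
  refine (eventually_all_finite (finite_lt_nat n)).mpr fun k _ => ?_
  exact tendsto_residual_of_isOpenMap (continuous_add_const _)
    (Homeomorph.addRight ((k : ℝ) * d)).isOpenMap hM

theorem RAP_of_diff_subset {U M A : Set ℝ} (hU : (interior U).Nonempty) (hM : IsMeagre M)
    (hA : U \ M ⊆ A) : RAP A := by
  intro n _
  obtain ⟨c, hc⟩ := hU
  obtain ⟨ε, hε, hball⟩ := Metric.mem_nhds_iff.mp (mem_interior_iff_mem_nhds.mp hc)
  set d := ε / (n + 1) with hd_def
  have hd : 0 < d := by positivity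
  have hnd : n * d < ε := by
    rw [hd_def, mul_div_assoc', div_lt_iff₀ (by positivity)]
    linarith
  obtain ⟨x, hx_avoid, hx⟩ :=
    (dense_of_mem_residual (eventually_residual_forall_add_mul_notMem hM n d)).exists_mem_open
      Metric.isOpen_ball (Metric.nonempty_ball (x := c) |>.mpr hd)
  refine ⟨x, d, hd, fun k hk => hA ⟨hball ?_, hx_avoid k hk⟩⟩
  have hk' : (k : ℝ) + 1 ≤ n := by exact_mod_cast hk
  have hkd : (k : ℝ) * d + d ≤ n * d := by nlinarith
  have hkd₀ : 0 ≤ (k : ℝ) * d := by positivity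
  rw [Metric.mem_ball, Real.dist_eq, abs_lt] at hx ⊢
  constructor <;> linarith [hx.1, hx.2]

/-- If `S ⊆ [0,1]` is Borel and not meager, then every homeomorphism of `[0,1]`
maps `S` onto a set rich in APs. -/
theorem nonmeager_borel_all_homeomorph_RAP (S : Set ℝ) (hS : S ⊆ Set.Icc 0 1)
    (hBorel : MeasurableSet S) (hmeager : ¬ IsMeagre S) :
    ∀ φ : Set.Icc (0:ℝ) 1 ≃ₜ Set.Icc (0:ℝ) 1, RAP (imgH φ S) := by
  intro φ
  set T : Set (Icc (0:ℝ) 1) := φ '' (Subtype.val ⁻¹' S) with hT_def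
  have hT_borel : MeasurableSet T := by
    rw [hT_def, φ.image_eq_preimage_symm]
    exact φ.symm.measurable (hBorel.preimage measurable_subtype_coe)
  have hT_nonmeagre : ¬ IsMeagre T := fun hT => hmeager <| by
    have := (hT.preimage_of_isOpenMap φ.continuous φ.isOpenMap).image_val
    rwa [φ.preimage_image, Subtype.image_preimage_coe, inter_eq_right.mpr hS] at this
  obtain ⟨U, hU, hU_ne, hUT⟩ :=
    hT_borel.baireMeasurableSet.exists_isOpen_nonempty_isMeagre_diff hT_nonmeagre
  have hIcc : Icc (0:ℝ) 1 ⊆ closure (interior (Icc 0 1)) := by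
    rw [interior_Icc, closure_Ioo zero_ne_one]
  refine RAP_of_diff_subset (interior_image_val_nonempty hIcc hU hU_ne) hUT.image_val ?_
  rw [← image_sdiff Subtype.val_injective, sdiff_sdiff_right_self]
  exact image_mono inter_subset_right
end
end

section
/- Let S ⊆ ℝ be residual in some interval X ⊆ ℝ of positive length, i.e., X \ S is meager and X is an interval with more than one point. Then S is RAP: for every integer n ≥ 3, S contains an n-term arithmetic progression. -/
open Set

noncomputable section

/-! Translation preserves meagreness, so the countably many sets `(X \ S) - k d` are jointly
meagre and, by Baire, all miss some `x` just above `a`, where `a < b` lie in `X` and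
`d = (b - a) / n`. Then `x, x + d, …, x + (n - 1) d` lie in `[a, b] ⊆ X`, hence in `S`. -/

section Translates

variable {G ι : Type*} [TopologicalSpace G] [AddGroup G] [SeparatelyContinuousAdd G]
  [Countable ι] {M : Set G}

theorem IsMeagre.iUnion_preimage_add_right (hM : IsMeagre M) (t : ι → G) :
    IsMeagre (⋃ i, (· + t i) ⁻¹' M) :=
  isMeagre_iUnion fun i =>
    hM.preimage_of_isOpenMap (Homeomorph.addRight (t i)).continuous (isOpenMap_add_right (t i))

theorem IsMeagre.exists_mem_forall_add_notMem [BaireSpace G] (hM : IsMeagre M) (t : ι → G)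
    {U : Set G} (hU : IsOpen U) (hne : U.Nonempty) : ∃ x ∈ U, ∀ i, x + t i ∉ M := by
  obtain ⟨x, hx, hxU⟩ :=
    (dense_of_mem_residual (hM.iUnion_preimage_add_right t)).exists_mem_open hU hne
  simp only [compl_iUnion, mem_iInter, mem_compl_iff, mem_preimage] at hx
  exact ⟨x, hxU, hx⟩

end Translates

theorem add_nat_mul_mem_Icc {a b d x : ℝ} {k n : ℕ} (hd : 0 ≤ d) (hx : x ∈ Ico a (a + d))
    (hk : k < n) (hnd : n * d ≤ b - a) : x + k * d ∈ Icc a b := by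
  have hk' : (k : ℝ) + 1 ≤ n := by exact_mod_cast hk
  constructor <;> nlinarith [hx.1, hx.2, (Nat.cast_nonneg k : (0 : ℝ) ≤ k)]

/-- A set residual in some interval of positive length is rich in APs. -/
theorem residual_in_interval_RAP (S X : Set ℝ) (hX : X.OrdConnected) (hXnt : X.Nontrivial)
    (hres : IsMeagre (X \ S)) : RAP S := by
  intro n hn
  obtain ⟨a, ha, b, hb, hab⟩ := hXnt.exists_lt
  have hn0 : (0 : ℝ) < n := by positivity
  set d := (b - a) / n
  have hd : 0 < d := div_pos (sub_pos.2 hab) hn0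
  obtain ⟨x, hx, hxS⟩ := hres.exists_mem_forall_add_notMem (fun k : ℕ => k * d) isOpen_Ioo
    (nonempty_Ioo.2 (lt_add_of_pos_right a hd))
  refine ⟨x, d, hd, fun k hk => ?_⟩
  have hnd : n * d = b - a := mul_div_cancel₀ _ hn0.ne'
  have hkX : x + k * d ∈ X :=
    hX.out ha hb (add_nat_mul_mem_Icc hd.le (Ioo_subset_Ico_self hx) hk hnd.le)
  by_contra hkS
  exact hxS k ⟨hkX, hkS⟩
end
end

section
/- Let C ⊆ [0,1] be a nowhere dense subset and ε > 0. Let H_ε(C) = {φ ∈ H⁺ : there are no x ∈ ℝ and d ≥ ε with x, x+d, x+2d ∈ φ(C)}. Then H_ε(C) contains a subset that is dense in H⁺ and open in H⁺; in particular H_ε(C) is residual in H⁺. -/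
/-!
The condition defining `H_ε` only gets stronger when `C` is replaced by `K = closure C`, and for
closed `K` it is open: `φ(K)` is compact, and a compact set without APs of step `≥ ε` has a
thickening without them. For density, composing with a given `φ₀` reduces the problem to
approximating the identity, with `K` replaced by the closed nowhere dense set `φ₀(K)`. Every cell
of a fine grid contains a gap of `K`; a monotone map which climbs only inside these gaps, and
takes generic values near the grid points in between, sends `K` into a finite AP-free set. Adding
a small multiple of the identity makes it strictly increasing and moves `K` only slightly.
-/

open Set

noncomputable section

/-- `H⁺`: the strictly increasing homeomorphisms of `[0,1]` onto itself, realized as the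
subset of `C([0,1], ℝ)` (carrying the sup-norm topology) consisting of the strictly
increasing continuous functions fixing `0` and `1` (such a map is automatically a
homeomorphism of `[0,1]` onto itself). -/
def Hplus : Set C(Set.Icc (0:ℝ) 1, ℝ) :=
  {f | StrictMono f ∧ f ⟨0, by norm_num⟩ = 0 ∧ f ⟨1, by norm_num⟩ = 1}

/-- The image in `ℝ` of a set `C ⊆ [0,1]` under `f : C([0,1], ℝ)`. -/
def imgC (f : C(Set.Icc (0:ℝ) 1, ℝ)) (C : Set ℝ) : Set ℝ :=
  ⇑f '' (Subtype.val ⁻¹' C)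

/-- `H_ε(C)`: the set of `φ ∈ H⁺` such that `φ(C)` has no 3-term AP of step `d ≥ ε`. -/
def Heps (C : Set ℝ) (ε : ℝ) : Set ↥Hplus :=
  {φ | ¬ ∃ x d : ℝ, ε ≤ d ∧ x ∈ imgC φ.1 C ∧ x + d ∈ imgC φ.1 C ∧ x + 2 * d ∈ imgC φ.1 C}

open Metric

def NoAPOfStepGE (ε : ℝ) (A : Set ℝ) : Prop :=
  ¬ ∃ x d : ℝ, ε ≤ d ∧ x ∈ A ∧ x + d ∈ A ∧ x + 2 * d ∈ A

theorem NoAPOfStepGE.mono {ε : ℝ} {A B : Set ℝ} (hB : NoAPOfStepGE ε B) (hAB : A ⊆ B) :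
    NoAPOfStepGE ε A :=
  fun ⟨x, d, hd, h₀, h₁, h₂⟩ => hB ⟨x, d, hd, hAB h₀, hAB h₁, hAB h₂⟩

theorem FAP.noAPOfStepGE {ε : ℝ} {A : Set ℝ} (hA : FAP A) (hε : 0 < ε) : NoAPOfStepGE ε A :=
  fun ⟨x, d, hd, h⟩ => hA ⟨x, d, hε.trans_le hd, h⟩

/-- The triples `(x, y, z)` forming an AP of step `≥ ε` make up a closed subset of `ℝ³`, from
which the compact set `A³` keeps a positive distance. -/
theorem IsCompact.exists_thickening_noAPOfStepGE {ε : ℝ} {A : Set ℝ} (hA : IsCompact A)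
    (hAP : NoAPOfStepGE ε A) : ∃ δ > 0, NoAPOfStepGE ε (thickening δ A) := by
  set Z : Set (ℝ × ℝ × ℝ) := {p | ε ≤ p.2.1 - p.1 ∧ p.2.2 = 2 * p.2.1 - p.1}
  have hZ : IsClosed Z := by
    apply IsClosed.inter
    · exact isClosed_le continuous_const (continuous_snd.fst.sub continuous_fst)
    · exact isClosed_eq (by fun_prop) (by fun_prop)
  have hAZ : A ×ˢ A ×ˢ A ⊆ Zᶜ := by
    rintro ⟨a, b, c⟩ ⟨ha, hb, hc⟩ ⟨hab, hc'⟩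
    refine hAP ⟨a, b - a, hab, ha, by simpa using hb, ?_⟩
    convert hc using 1
    simp only at hc'
    linarith
  obtain ⟨δ, hδ, hthick⟩ :=
    (hA.prod (hA.prod hA)).exists_thickening_subset_open hZ.isOpen_compl hAZ
  refine ⟨δ, hδ, fun ⟨x, d, hd, h₀, h₁, h₂⟩ => ?_⟩
  obtain ⟨a, ha, had⟩ := mem_thickening_iff.1 h₀
  obtain ⟨b, hb, hbd⟩ := mem_thickening_iff.1 h₁
  obtain ⟨c, hc, hcd⟩ := mem_thickening_iff.1 h₂
  have hnear : (x, x + d, x + 2 * d) ∈ thickening δ (A ×ˢ A ×ˢ A) :=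
    mem_thickening_iff.2 ⟨(a, b, c), ⟨ha, hb, hc⟩, by
      simp only [Prod.dist_eq]; exact max_lt had (max_lt hbd hcd)⟩
  exact hthick hnear ⟨by simpa using hd, by ring⟩

theorem isCompact_imgC (f : C(Icc (0 : ℝ) 1, ℝ)) {K : Set ℝ} (hK : IsClosed K) :
    IsCompact (imgC f K) :=
  (hK.preimage continuous_subtype_val).isCompact.image f.continuous

theorem isOpen_setOf_noAPOfStepGE_imgC (ε : ℝ) {K : Set ℝ} (hK : IsClosed K) :
    IsOpen {f : C(Icc (0 : ℝ) 1, ℝ) | NoAPOfStepGE ε (imgC f K)} := by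
  refine Metric.isOpen_iff.2 fun f hf => ?_
  obtain ⟨δ, hδ, hthick⟩ := (isCompact_imgC f hK).exists_thickening_noAPOfStepGE hf
  refine ⟨δ, hδ, fun g hg => hthick.mono ?_⟩
  rintro _ ⟨t, ht, rfl⟩
  exact mem_thickening_iff.2 ⟨f t, ⟨t, ht, rfl⟩,
    (ContinuousMap.dist_apply_le_dist t).trans_lt (mem_ball.1 hg)⟩

theorem FAP.insert_of_notMem {T : Set ℝ} (hT : FAP T) {v : ℝ}
    (hv₁ : v ∉ image2 (fun b c => 2 * b - c) T T)
    (hv₂ : v ∉ image2 (fun a c => (a + c) / 2) T T) :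
    FAP (insert v T) := by
  rintro ⟨x, d, hd, h₀, h₁, h₂⟩
  rcases h₀ with rfl | h₀ <;> rcases h₁ with h₁ | h₁ <;> rcases h₂ with h₂ | h₂
  all_goals first
    | exact hT ⟨x, d, hd, h₀, h₁, h₂⟩
    | exact hv₁ ⟨_, h₁, _, h₂, by ring⟩
    | exact hv₂ ⟨_, h₀, _, h₂, by rw [← h₁]; ring⟩
    | exact hv₁ ⟨_, h₁, _, h₀, by rw [← h₂]; ring⟩
    | linarith

theorem FAP.exists_insert_mem_Ioo {T : Set ℝ} (hT : FAP T) (hfin : T.Finite) {L R : ℝ}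
    (hLR : L < R) : ∃ v ∈ Ioo L R, FAP (insert v T) := by
  obtain ⟨v, hv, hvB⟩ := ((Ioo_infinite hLR).sdiff ((hfin.image2 _ hfin).union
    (hfin.image2 _ hfin))).nonempty
  exact ⟨v, hv, hT.insert_of_notMem (fun h => hvB (Or.inl h)) (fun h => hvB (Or.inr h))⟩

theorem exists_FAP_perturbation {ι : Type*} [DecidableEq ι] (F s : Finset ι) (x : ι → ℝ)
    (hF : FAP (x '' F)) {ρ : ℝ} (hρ : 0 < ρ) :
    ∃ c : ι → ℝ, (∀ i ∈ F, c i = x i) ∧ (∀ i, |c i - x i| < ρ) ∧ FAP (c '' ↑(F ∪ s)) := by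
  induction s using Finset.induction_on with
  | empty => exact ⟨x, fun _ _ => rfl, fun _ => by simpa using hρ, by simpa using hF⟩
  | insert j s hjs ih =>
    obtain ⟨c, hcF, hcx, hcAP⟩ := ih
    by_cases hj : j ∈ F
    · exact ⟨c, hcF, hcx, by rwa [Finset.union_insert, Finset.insert_eq_of_mem
        (Finset.mem_union_left s hj)]⟩
    obtain ⟨v, hv, hvAP⟩ := hcAP.exists_insert_mem_Ioo ((F ∪ s).finite_toSet.image c)
      (show x j - ρ < x j + ρ by linarith)
    have hjFs : j ∉ F ∪ s := by simp [hj, hjs]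
    refine ⟨Function.update c j v, fun i hi => ?_, fun i => ?_, ?_⟩
    · rw [Function.update_of_ne (ne_of_mem_of_not_mem hi hj)]
      exact hcF i hi
    · rcases eq_or_ne i j with rfl | hij
      · rw [Function.update_self, abs_sub_lt_iff]
        constructor <;> linarith [hv.1, hv.2]
      · rw [Function.update_of_ne hij]
        exact hcx i
    · rw [Finset.union_insert, Finset.coe_insert, image_insert_eq, Function.update_self,
        image_congr fun i hi => Function.update_of_ne (ne_of_mem_of_not_mem hi hjFs) v c]
      exact hvAP

theorem IsClosed.exists_Ioo_disjoint {K : Set ℝ} (hK : IsClosed K) (hKi : interior K = ∅)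
    {p q : ℝ} (hpq : p < q) : ∃ a b, p ≤ a ∧ a < b ∧ b ≤ q ∧ ∀ x ∈ K, x ≤ a ∨ b ≤ x := by
  obtain ⟨w, hwK, hw⟩ := (interior_eq_empty_iff_dense_compl.1 hKi).exists_mem_open isOpen_Ioo
    (nonempty_Ioo.2 hpq)
  obtain ⟨l, u, ⟨hlw, hwu⟩, hlu⟩ :=
    mem_nhds_iff_exists_Ioo_subset.1 (hK.isOpen_compl.mem_nhds hwK)
  refine ⟨max l p, min u q, le_max_right _ _, ?_, min_le_right _ _, fun x hx => ?_⟩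
  · exact (max_lt hlw hw.1).trans (lt_min hwu hw.2)
  · by_contra! h
    exact hlu ⟨(le_max_left _ _).trans_lt h.1, h.2.trans_le (min_le_left _ _)⟩ hx

def ramp (a b x : ℝ) : ℝ := max 0 (min 1 ((x - a) / (b - a)))

theorem continuous_ramp (a b : ℝ) : Continuous (ramp a b) := by
  unfold ramp; fun_prop

theorem monotone_ramp {a b : ℝ} (hab : a ≤ b) : Monotone (ramp a b) := fun _ _ h =>
  max_le_max le_rfl (min_le_min le_rfl (div_le_div_of_nonneg_right (by linarith) (by linarith)))

theorem ramp_mem_Icc (a b x : ℝ) : ramp a b x ∈ Icc 0 1 :=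
  ⟨le_max_left _ _, max_le zero_le_one (min_le_left _ _)⟩

theorem ramp_eq_zero {a b x : ℝ} (hab : a ≤ b) (hx : x ≤ a) : ramp a b x = 0 :=
  max_eq_left (min_le_of_right_le (div_nonpos_of_nonpos_of_nonneg (by linarith) (by linarith)))

theorem ramp_eq_one {a b x : ℝ} (hab : a < b) (hx : b ≤ x) : ramp a b x = 1 := by
  rw [ramp, min_eq_left ((one_le_div (by linarith)).2 (by linarith)), max_eq_right zero_le_one]

theorem sum_range_sub_mul_eq (c θ : ℕ → ℝ) {k N : ℕ} (hk : k < N) (h₁ : ∀ i < k, θ i = 1)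
    (h₀ : ∀ i, k < i → i < N → θ i = 0) :
    ∑ i ∈ Finset.range N, (c (i + 1) - c i) * θ i = c k - c 0 + (c (k + 1) - c k) * θ k := by
  rw [← Finset.sum_range_add_sum_Ico _ (Nat.succ_le_of_lt hk), Finset.sum_range_succ,
    Finset.sum_congr rfl fun i hi => by rw [h₁ i (Finset.mem_range.1 hi), mul_one],
    Finset.sum_range_sub, Finset.sum_eq_zero fun i hi => by
      rw [Finset.mem_Ico] at hi; rw [h₀ i hi.1 hi.2, mul_zero], add_zero]

theorem exists_lt_mem_Icc_div {N : ℕ} (hN : 0 < N) {x : ℝ} (hx : x ∈ Icc 0 1) :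
    ∃ k < N, x ∈ Icc ((k : ℝ) / N) ((k + 1) / N) := by
  have hN' : (0 : ℝ) < N := Nat.cast_pos.2 hN
  rcases hx.2.eq_or_lt with rfl | hx1
  · refine ⟨N - 1, Nat.sub_lt hN one_pos, ?_⟩
    rw [Nat.cast_pred hN, sub_add_cancel, div_self hN'.ne']
    exact ⟨div_le_one_of_le₀ (by linarith) hN'.le, le_rfl⟩
  · refine ⟨⌊x * N⌋₊, ?_, ?_, ?_⟩
    · exact (Nat.floor_lt (by nlinarith [hx.1])).2 (by simpa using mul_lt_mul_of_pos_right hx1 hN')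
    · rw [div_le_iff₀ hN']; exact Nat.floor_le (by nlinarith [hx.1])
    · rw [le_div_iff₀ hN']; exact (Nat.lt_floor_add_one _).le

def stepMap (N : ℕ) (a b c : ℕ → ℝ) (x : ℝ) : ℝ :=
  c 0 + ∑ k ∈ Finset.range N, (c (k + 1) - c k) * ramp (a k) (b k) x

section stepMap

variable {N : ℕ} {a b c : ℕ → ℝ}

theorem continuous_stepMap : Continuous (stepMap N a b c) := by
  unfold stepMap
  exact continuous_const.add (continuous_finsetSum _ fun k _ =>
    continuous_const.mul (continuous_ramp _ _))

theorem monotone_stepMap (hab : ∀ k, a k ≤ b k) (hc : ∀ k, c k ≤ c (k + 1)) :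
    Monotone (stepMap N a b c) := fun x y hxy => by
  unfold stepMap
  gcongr with k hk
  · exact sub_nonneg.2 (hc k)
  · exact monotone_ramp (hab k) hxy

theorem stepMap_of_forall_le (hab : ∀ k, a k ≤ b k) {x : ℝ} (hx : ∀ k < N, x ≤ a k) :
    stepMap N a b c x = c 0 := by
  rw [stepMap, Finset.sum_eq_zero fun k hk => by
    rw [ramp_eq_zero (hab k) (hx k (Finset.mem_range.1 hk)), mul_zero], add_zero]

theorem stepMap_of_forall_ge (hab : ∀ k, a k < b k) {x : ℝ} (hx : ∀ k < N, b k ≤ x) :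
    stepMap N a b c x = c N := by
  rw [stepMap, Finset.sum_congr rfl fun k hk => by
    rw [ramp_eq_one (hab k) (hx k (Finset.mem_range.1 hk)), mul_one], Finset.sum_range_sub]
  ring

theorem stepMap_eq_of_mem_Icc (ha : ∀ k : ℕ, (k : ℝ) / N ≤ a k) (hab : ∀ k, a k < b k)
    (hb : ∀ k : ℕ, b k ≤ (k + 1) / N) {k : ℕ} (hk : k < N) {x : ℝ}
    (hx : x ∈ Icc ((k : ℝ) / N) ((k + 1) / N)) :
    stepMap N a b c x = c k + (c (k + 1) - c k) * ramp (a k) (b k) x := by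
  have hdiv : ∀ {i j : ℕ}, i ≤ j → (i : ℝ) / N ≤ j / N := fun h =>
    div_le_div_of_nonneg_right (Nat.cast_le.2 h) (Nat.cast_nonneg N)
  rw [stepMap, sum_range_sub_mul_eq c _ hk (fun i hi => ramp_eq_one (hab i) ?_)
    (fun i hki _ => ramp_eq_zero (hab i).le ?_)]
  · ring
  · calc b i ≤ ((i + 1 : ℕ) : ℝ) / N := by exact_mod_cast hb i
      _ ≤ k / N := hdiv hi
      _ ≤ x := hx.1
  · calc x ≤ ((k + 1 : ℕ) : ℝ) / N := by exact_mod_cast hx.2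
      _ ≤ i / N := hdiv hki
      _ ≤ a i := ha i

theorem abs_stepMap_sub_lt (ha : ∀ k : ℕ, (k : ℝ) / N ≤ a k) (hab : ∀ k, a k < b k)
    (hb : ∀ k : ℕ, b k ≤ (k + 1) / N) (hN : 0 < N) (hc : ∀ j : ℕ, |c j - j / N| < 1 / N / 2)
    {x : ℝ} (hx : x ∈ Icc 0 1) : |stepMap N a b c x - x| < 2 / N := by
  obtain ⟨k, hk, hxk⟩ := exists_lt_mem_Icc_div hN hx
  have hck := abs_lt.1 (hc k)
  have hck' := abs_lt.1 (hc (k + 1))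
  rw [Nat.cast_succ, add_div] at hck'
  have hθ := ramp_mem_Icc (a k) (b k) x
  have hmono : c k ≤ c (k + 1) := by linarith [hck.2, hck'.1]
  have hlo := mul_nonneg (sub_nonneg.2 hmono) hθ.1
  have hhi := mul_le_mul_of_nonneg_left hθ.2 (sub_nonneg.2 hmono)
  rw [stepMap_eq_of_mem_Icc ha hab hb hk hxk, abs_lt, show 2 / (N : ℝ) = 2 * (1 / N) by ring]
  rw [add_div] at hxk
  constructor <;> linarith [hxk.1, hxk.2]

theorem exists_stepMap_eq (ha : ∀ k : ℕ, (k : ℝ) / N ≤ a k) (hab : ∀ k, a k < b k)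
    (hb : ∀ k : ℕ, b k ≤ (k + 1) / N) {K : Set ℝ} (hgap : ∀ k, ∀ x ∈ K, x ≤ a k ∨ b k ≤ x)
    (hN : 0 < N) {x : ℝ} (hxK : x ∈ K) (hx : x ∈ Icc 0 1) :
    ∃ j ≤ N, stepMap N a b c x = c j := by
  obtain ⟨k, hk, hxk⟩ := exists_lt_mem_Icc_div hN hx
  rw [stepMap_eq_of_mem_Icc ha hab hb hk hxk]
  rcases hgap k x hxK with hxa | hbx
  · exact ⟨k, hk.le, by rw [ramp_eq_zero (hab k).le hxa, mul_zero, add_zero]⟩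
  · exact ⟨k + 1, hk, by rw [ramp_eq_one (hab k) hbx, mul_one, add_sub_cancel]⟩

end stepMap

theorem FAP_zero_one : FAP {0, 1} := by
  rintro ⟨x, d, hd, h₀, h₁, h₂⟩
  simp only [mem_insert_iff, mem_singleton_iff] at h₀ h₁ h₂
  rcases h₀ with rfl | rfl <;> rcases h₁ with h₁ | h₁ <;> rcases h₂ with h₂ | h₂ <;> linarith

/-- Each gap `(a k, b k)` misses `K` and lies in the `k`-th cell of the grid of mesh `1 / N`, so
`K` is sent into the finite set of values `c j`, which are chosen near `j / N` and free of
3-term APs. -/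
theorem exists_monotone_mapsTo_FAP {K : Set ℝ} (hK : IsClosed K) (hKi : interior K = ∅)
    (hKsub : K ⊆ Icc 0 1) {r : ℝ} (hr : 0 < r) :
    ∃ G : ℝ → ℝ, Continuous G ∧ Monotone G ∧ G 0 = 0 ∧ G 1 = 1 ∧
      (∀ x ∈ Icc 0 1, |G x - x| < r) ∧ ∃ S : Set ℝ, S.Finite ∧ FAP S ∧ MapsTo G K S := by
  obtain ⟨N, hNr⟩ := exists_nat_gt (2 / r)
  have hN' : (0 : ℝ) < N := (div_pos two_pos hr).trans hNr
  have hN : 0 < N := Nat.cast_pos.1 hN'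
  choose a b ha hab hb hgap using fun k : ℕ =>
    hK.exists_Ioo_disjoint hKi (div_lt_div_of_pos_right (lt_add_one (k : ℝ)) hN')
  obtain ⟨c, hcF, hc, hcAP⟩ := exists_FAP_perturbation {0, N} (Finset.range (N + 1))
    (fun j : ℕ => (j : ℝ) / N) (by
      rw [Finset.coe_pair, image_pair]; simpa [div_self hN'.ne'] using FAP_zero_one)
    (show 0 < 1 / (N : ℝ) / 2 by positivity)
  have hmono : ∀ k, c k ≤ c (k + 1) := fun k => by
    have hck := abs_lt.1 (hc k)
    have hck' := abs_lt.1 (hc (k + 1))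
    rw [Nat.cast_succ, add_div] at hck'
    linarith [hck.2, hck'.1]
  refine ⟨stepMap N a b c, continuous_stepMap, monotone_stepMap (fun k => (hab k).le) hmono, ?_, ?_,
    fun x hx => (abs_stepMap_sub_lt ha hab hb hN hc hx).trans (div_lt_comm₀ hr hN' |>.1 hNr),
    c '' ↑({0, N} ∪ Finset.range (N + 1)), (Finset.finite_toSet _).image c, hcAP, ?_⟩
  · rw [stepMap_of_forall_le (fun k => (hab k).le) fun k _ =>
      (div_nonneg k.cast_nonneg hN'.le).trans (ha k)]
    simpa using hcF 0 (by simp)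
  · rw [stepMap_of_forall_ge hab fun k hk => (hb k).trans
      (div_le_one_of_le₀ (by exact_mod_cast hk) hN'.le)]
    simpa [div_self hN'.ne'] using hcF N (by simp)
  · intro x hx
    obtain ⟨j, hj, hGx⟩ := exists_stepMap_eq ha hab hb hgap hN hx (hKsub hx)
    exact hGx ▸ mem_image_of_mem c (by simp [Nat.lt_succ_of_le hj])

/-- Mixing a small multiple `l` of the identity into `G` makes it strictly monotone and moves
each `G x` by at most `l`, so `h(K)` stays inside a thickening of the finite AP-free set `G(K)`. -/
theorem exists_strictMono_noAPOfStepGE {K : Set ℝ} (hK : IsClosed K) (hKi : interior K = ∅)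
    (hKsub : K ⊆ Icc 0 1) {ε r : ℝ} (hε : 0 < ε) (hr : 0 < r) :
    ∃ h : ℝ → ℝ, Continuous h ∧ StrictMono h ∧ h 0 = 0 ∧ h 1 = 1 ∧
      (∀ x ∈ Icc 0 1, |h x - x| < r) ∧ NoAPOfStepGE ε (h '' K) := by
  obtain ⟨G, hGc, hGm, hG0, hG1, hGr, S, hSfin, hSAP, hGS⟩ :=
    exists_monotone_mapsTo_FAP hK hKi hKsub hr
  obtain ⟨δ, hδ, hδAP⟩ :=
    hSfin.isCompact.exists_thickening_noAPOfStepGE (hSAP.noAPOfStepGE hε)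
  set l := min (1 / 2) (δ / 2)
  have hl : 0 < l := lt_min (by norm_num) (by linarith)
  have hl1 : l ≤ 1 / 2 := min_le_left _ _
  have hlδ : l < δ := (min_le_right _ _).trans_lt (by linarith)
  refine ⟨fun x => (1 - l) * G x + l * x, by fun_prop, fun x y hxy => ?_, by simp [hG0],
    by simp [hG1], fun x hx => ?_, hδAP.mono ?_⟩
  · have hG := mul_le_mul_of_nonneg_left (hGm hxy.le) (by linarith : 0 ≤ 1 - l)
    have hid := mul_lt_mul_of_pos_left hxy hl
    dsimp only
    linarith
  · rw [show (1 - l) * G x + l * x - x = (1 - l) * (G x - x) by ring, abs_mul,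
      abs_of_pos (by linarith)]
    exact (mul_le_of_le_one_left (abs_nonneg _) (by linarith)).trans_lt (hGr x hx)
  · rintro _ ⟨x, hx, rfl⟩
    have hx01 := hKsub hx
    have hGx : G x ∈ Icc 0 1 := ⟨hG0 ▸ hGm hx01.1, hG1 ▸ hGm hx01.2⟩
    refine mem_thickening_iff.2 ⟨G x, hGS hx, ?_⟩
    rw [Real.dist_eq, show (1 - l) * G x + l * x - G x = l * (x - G x) by ring, abs_mul,
      abs_of_pos hl]
    have hdist : |x - G x| ≤ 1 :=
      abs_le.2 ⟨by linarith [hx01.1, hGx.2], by linarith [hx01.2, hGx.1]⟩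
    exact (mul_le_of_le_one_right hl.le hdist).trans_lt hlδ

theorem mem_Icc_of_mem_Hplus {f : C(Icc (0 : ℝ) 1, ℝ)} (hf : f ∈ Hplus) (t : Icc (0 : ℝ) 1) :
    f t ∈ Icc 0 1 := by
  obtain ⟨hmono, h0, h1⟩ := hf
  exact ⟨h0.symm.trans_le (hmono.monotone t.2.1), (hmono.monotone t.2.2).trans_eq h1⟩

theorem comp_mem_Hplus {h : ℝ → ℝ} (hc : Continuous h) (hmono : StrictMono h) (h0 : h 0 = 0)
    (h1 : h 1 = 1) {f : C(Icc (0 : ℝ) 1, ℝ)} (hf : f ∈ Hplus) :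
    (⟨h, hc⟩ : C(ℝ, ℝ)).comp f ∈ Hplus :=
  ⟨hmono.comp hf.1, by simp only [ContinuousMap.comp_apply, ContinuousMap.coe_mk, hf.2.1, h0],
    by simp only [ContinuousMap.comp_apply, ContinuousMap.coe_mk, hf.2.2, h1]⟩

/-- A nonempty open interval inside `f(K)` pulls back, by injectivity of `f`, to one inside `K`. -/
theorem interior_imgC_eq_empty {f : C(Icc (0 : ℝ) 1, ℝ)} (hf : StrictMono f) {K : Set ℝ}
    (hKi : interior K = ∅) : interior (imgC f K) = ∅ := by
  refine eq_empty_of_forall_notMem fun y hy => ?_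
  obtain ⟨l, u, ⟨hly, hyu⟩, hlu⟩ :=
    mem_nhds_iff_exists_Ioo_subset.1 (isOpen_interior.mem_nhds hy)
  have hsub : Ioo l u ⊆ imgC f K := hlu.trans interior_subset
  obtain ⟨s, -, hs⟩ := hsub ⟨hly, hyu⟩
  obtain ⟨t, -, ht⟩ := hsub (show (y + u) / 2 ∈ Ioo l u by constructor <;> linarith)
  have hst : s < t := hf.lt_iff_lt.1 (by rw [hs, ht]; linarith)
  have hIoo : Ioo (s : ℝ) t ⊆ K := fun z hz => by
    have hz01 : z ∈ Icc (0 : ℝ) 1 := ⟨s.2.1.trans hz.1.le, hz.2.le.trans t.2.2⟩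
    have hfz : f ⟨z, hz01⟩ ∈ Ioo l u := by
      constructor
      · exact hly.trans_le (hs ▸ hf.monotone (Subtype.coe_le_coe.1 hz.1.le))
      · exact (hf (show (⟨z, hz01⟩ : Icc (0 : ℝ) 1) < t from hz.2)).trans (by linarith)
    obtain ⟨w, hwK, hw⟩ := hsub hfz
    rw [hf.injective hw] at hwK
    exact hwK
  have := interior_maximal hIoo isOpen_Ioo
  rw [hKi] at this
  exact (nonempty_Ioo.2 (Subtype.coe_lt_coe.2 hst)).ne_empty (subset_empty_iff.1 this)

theorem dense_setOf_noAPOfStepGE_imgC {K : Set ℝ} (hK : IsClosed K) (hKi : interior K = ∅)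
    {ε : ℝ} (hε : 0 < ε) : Dense {φ : Hplus | NoAPOfStepGE ε (imgC φ.1 K)} := by
  refine Metric.dense_iff.2 fun φ r hr => ?_
  obtain ⟨h, hc, hmono, h0, h1, hr', hAP⟩ := exists_strictMono_noAPOfStepGE
    (isCompact_imgC φ.1 hK).isClosed (interior_imgC_eq_empty φ.2.1 hKi)
    (by rintro _ ⟨t, -, rfl⟩; exact mem_Icc_of_mem_Hplus φ.2 t) hε hr
  refine ⟨⟨_, comp_mem_Hplus hc hmono h0 h1 φ.2⟩, ?_, ?_⟩
  · rw [mem_ball, Subtype.dist_eq, ContinuousMap.dist_lt_iff hr]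
    exact fun t => hr' _ (mem_Icc_of_mem_Hplus φ.2 t)
  · rwa [mem_ofPred_eq, imgC, ContinuousMap.coe_comp, ContinuousMap.coe_mk, image_comp]

theorem Heps_contains_dense_open_general (C : Set ℝ) (hnd : IsNowhereDense C) (ε : ℝ) (hε : 0 < ε) :
    (∃ U : Set ↥Hplus, IsOpen U ∧ Dense U ∧ U ⊆ Heps C ε) ∧ IsMeagre (Heps C ε)ᶜ := by
  set U := {φ : Hplus | NoAPOfStepGE ε (imgC φ.1 (closure C))}
  have hUo : IsOpen U :=
    (isOpen_setOf_noAPOfStepGE_imgC ε isClosed_closure).preimage continuous_subtype_val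
  have hUd : Dense U := dense_setOf_noAPOfStepGE_imgC isClosed_closure hnd hε
  have hUsub : U ⊆ Heps C ε := fun φ hφ =>
    NoAPOfStepGE.mono hφ (image_mono (preimage_mono subset_closure))
  refine ⟨⟨U, hUo, hUd, hUsub⟩, ?_⟩
  rw [IsMeagre, compl_compl]
  exact Filter.mem_of_superset (residual_of_dense_open hUo hUd) hUsub

/-- For nowhere dense `C ⊆ [0,1]` and `ε > 0`, the set `H_ε(C)` contains a dense open
subset of `H⁺`; in particular `H_ε(C)` is residual in `H⁺`. -/
theorem Heps_contains_dense_open (C : Set ℝ) (hC : C ⊆ Set.Icc 0 1)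
    (hnd : IsNowhereDense C) (ε : ℝ) (hε : 0 < ε) :
    (∃ U : Set ↥Hplus, IsOpen U ∧ Dense U ∧ U ⊆ Heps C ε) ∧ IsMeagre (Heps C ε)ᶜ :=
  Heps_contains_dense_open_general C hnd ε hε
end
end

section
/- Let C ⊆ [0,1] be a compact nowhere dense set, let g : [0,1] → [0,1] be a homeomorphism, and let ε > 0. Assume g(C) contains no 3-term arithmetic progression with step d ≥ ε (no x ∈ ℝ, d ≥ ε with x, x+d, x+2d ∈ g(C)). Then there exists δ > 0 such that for every homeomorphism h : [0,1] → [0,1] with ‖h − g‖ < δ (supremum norm), the set h(C) contains no 3-term arithmetic progression with step d > 2ε. -/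
open Set

noncomputable section

/-! If the compact set `K = g(C)` has no 3-term progression of step `≥ ε`, the cube `K³ ⊆ ℝ³`
is disjoint from the closed set of triples `(a, b, c)` with `b - a = c - b ≥ ε`, hence so is a
uniform `δ`-neighbourhood of `K³`. Every point of `h(C)` lies within `‖h - g‖` of `K`, so for
`‖h - g‖ < δ` the set `h(C)` has no progression of step `≥ ε`, let alone `> 2ε`. -/

open Metric

theorem isClosed_setOf_arithProgression (ε : ℝ) :
    IsClosed {p : ℝ × ℝ × ℝ | p.2.1 - p.1 = p.2.2 - p.2.1 ∧ ε ≤ p.2.1 - p.1} := by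
  have hstep : Continuous fun p : ℝ × ℝ × ℝ => p.2.1 - p.1 := by fun_prop
  exact (isClosed_eq hstep (by fun_prop)).inter (isClosed_le continuous_const hstep)

theorem IsCompact.exists_thickening_not_exists_arithProgression {K : Set ℝ} {ε : ℝ}
    (hK : IsCompact K) (hK_AP : ¬ ∃ x d : ℝ, ε ≤ d ∧ x ∈ K ∧ x + d ∈ K ∧ x + 2 * d ∈ K) :
    ∃ δ > 0, ¬ ∃ x d : ℝ, ε ≤ d ∧ x ∈ thickening δ K ∧ x + d ∈ thickening δ K ∧
      x + 2 * d ∈ thickening δ K := by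
  have hdisj : K ×ˢ K ×ˢ K ⊆
      {p : ℝ × ℝ × ℝ | p.2.1 - p.1 = p.2.2 - p.2.1 ∧ ε ≤ p.2.1 - p.1}ᶜ := by
    rintro ⟨a, b, c⟩ ⟨ha, hb, hc⟩ ⟨hstep, hε⟩
    have hc' : a + 2 * (b - a) = c := by linarith
    exact hK_AP ⟨a, b - a, hε, ha, by rwa [add_sub_cancel], hc' ▸ hc⟩
  obtain ⟨δ, hδ, hthick⟩ := (hK.prod (hK.prod hK)).exists_thickening_subset_open
    (isClosed_setOf_arithProgression ε).isOpen_compl hdisj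
  refine ⟨δ, hδ, ?_⟩
  rintro ⟨x, d, hd, h₀, h₁, h₂⟩
  obtain ⟨a, ha, hxa⟩ := mem_thickening_iff.1 h₀
  obtain ⟨b, hb, hxb⟩ := mem_thickening_iff.1 h₁
  obtain ⟨c, hc, hxc⟩ := mem_thickening_iff.1 h₂
  have hnear : (x, x + d, x + 2 * d) ∈ thickening δ (K ×ˢ K ×ˢ K) :=
    mem_thickening_iff.2 ⟨(a, b, c), ⟨ha, hb, hc⟩, by
      simpa only [Prod.dist_eq, max_lt_iff] using ⟨hxa, hxb, hxc⟩⟩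
  exact hthick hnear ⟨by ring, by simpa only [add_sub_cancel_left] using hd⟩

theorem isCompact_imgH (φ : Icc (0:ℝ) 1 ≃ₜ Icc (0:ℝ) 1) {S : Set ℝ} (hS : IsClosed S) :
    IsCompact (imgH φ S) :=
  ((hS.preimage continuous_subtype_val).isCompact.image φ.continuous).image continuous_subtype_val

theorem imgH_subset_thickening {φ ψ : Icc (0:ℝ) 1 ≃ₜ Icc (0:ℝ) 1} {δ : ℝ}
    (hφψ : ∀ x, |(φ x : ℝ) - (ψ x : ℝ)| < δ) (S : Set ℝ) :
    imgH φ S ⊆ thickening δ (imgH ψ S) := by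
  rintro _ ⟨_, ⟨x, hx, rfl⟩, rfl⟩
  exact mem_thickening_iff.2 ⟨ψ x, ⟨ψ x, ⟨x, hx, rfl⟩, rfl⟩, hφψ x⟩

theorem no_AP_stable_under_perturbation_general (C : Set ℝ)
    (hcomp : IsCompact C)
    (g : Set.Icc (0:ℝ) 1 ≃ₜ Set.Icc (0:ℝ) 1) (ε : ℝ) (hε : 0 < ε)
    (hg : ¬ ∃ x d : ℝ, ε ≤ d ∧ x ∈ imgH g C ∧ x + d ∈ imgH g C ∧ x + 2 * d ∈ imgH g C) :
    ∃ δ > 0, ∀ h : Set.Icc (0:ℝ) 1 ≃ₜ Set.Icc (0:ℝ) 1,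
      (∀ x : Set.Icc (0:ℝ) 1, |(h x : ℝ) - (g x : ℝ)| < δ) →
      ¬ ∃ x d : ℝ, 2 * ε < d ∧ x ∈ imgH h C ∧ x + d ∈ imgH h C ∧ x + 2 * d ∈ imgH h C := by
  obtain ⟨δ, hδ, hfar⟩ :=
    (isCompact_imgH g hcomp.isClosed).exists_thickening_not_exists_arithProgression hg
  refine ⟨δ, hδ, fun h hhg ⟨x, d, hd, h₀, h₁, h₂⟩ => hfar ⟨x, d, by linarith, ?_⟩⟩
  have hnear := imgH_subset_thickening hhg C
  exact ⟨hnear h₀, hnear h₁, hnear h₂⟩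

/-- Stability lemma: if `C ⊆ [0,1]` is compact nowhere dense and the image `g(C)` under a
homeomorphism `g` of `[0,1]` has no 3-term AP of step `d ≥ ε`, then there is `δ > 0` such
that for every homeomorphism `h` of `[0,1]` with `‖h - g‖ < δ` (sup norm), the image
`h(C)` has no 3-term AP of step `d > 2ε`. -/
theorem no_AP_stable_under_perturbation (C : Set ℝ) (hC : C ⊆ Set.Icc 0 1)
    (hcomp : IsCompact C) (hnd : IsNowhereDense C)
    (g : Set.Icc (0:ℝ) 1 ≃ₜ Set.Icc (0:ℝ) 1) (ε : ℝ) (hε : 0 < ε)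
    (hg : ¬ ∃ x d : ℝ, ε ≤ d ∧ x ∈ imgH g C ∧ x + d ∈ imgH g C ∧ x + 2 * d ∈ imgH g C) :
    ∃ δ > 0, ∀ h : Set.Icc (0:ℝ) 1 ≃ₜ Set.Icc (0:ℝ) 1,
      (∀ x : Set.Icc (0:ℝ) 1, |(h x : ℝ) - (g x : ℝ)| < δ) →
      ¬ ∃ x d : ℝ, 2 * ε < d ∧ x ∈ imgH h C ∧ x + d ∈ imgH h C ∧ x + 2 * d ∈ imgH h C :=
  no_AP_stable_under_perturbation_general C hcomp g ε hε hg
end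
end

section
/- Every finite set F ⊂ ℝ is universal for the class of sets residual in some interval of positive length: if X ⊆ ℝ is an interval with more than one point and S ⊆ ℝ is such that X \ S is meager, then there exist a > 0 and b ∈ ℝ such that a·F + b ⊆ S. -/
open Set

noncomputable section

/-!
By Baire's theorem, the translations `b` moving every point of a finite family into the
complement of a meagre set form a residual, hence dense, set; and those moving every point of
the family into a given open set `U` form an open set, which is nonempty once the family has been
shrunk towards a point of `U`. A translation in both sets puts the shrunken copy of `F` inside
`U` but outside `U \ S`, that is, inside `S`.
-/

open Filter Topology

section Translates

variable {G ι : Type*} [TopologicalSpace G] [AddGroup G] [IsTopologicalAddGroup G]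

theorem eventually_residual_forall_add_notMem {F : Set ι} (hF : F.Finite) (f : ι → G)
    {M : Set G} (hM : IsMeagre M) : ∀ᶠ b in residual G, ∀ x ∈ F, f x + b ∉ M :=
  (eventually_all_finite hF).2 fun x _ =>
    hM.preimage_of_isOpenMap (Homeomorph.addLeft (f x)).continuous
      (Homeomorph.addLeft (f x)).isOpenMap

theorem isOpen_setOf_forall_add_mem {F : Set ι} (hF : F.Finite) (f : ι → G) {U : Set G}
    (hU : IsOpen U) : IsOpen {b | ∀ x ∈ F, f x + b ∈ U} := by
  convert hF.isOpen_biInter fun x _ => hU.preimage (continuous_const_add (f x)) using 1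
  ext
  simp

theorem exists_forall_add_mem_of_isMeagre_diff [BaireSpace G] {F : Set ι} (hF : F.Finite)
    (f : ι → G) {U S : Set G} (hU : IsOpen U) (hres : IsMeagre (U \ S))
    (hfit : ∃ b, ∀ x ∈ F, f x + b ∈ U) : ∃ b, ∀ x ∈ F, f x + b ∈ S := by
  obtain ⟨b, hbU, hbS⟩ := (dense_of_mem_residual
    (eventually_residual_forall_add_notMem hF f hres)).exists_mem_open
      (isOpen_setOf_forall_add_mem hF f hU) hfit
  exact ⟨b, fun x hx => not_not.1 fun hxS => hbU x hx ⟨hbS x hx, hxS⟩⟩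

end Translates

section Homothets

variable {E : Type*} [AddCommGroup E] [Module ℝ E] [TopologicalSpace E]
  [IsTopologicalAddGroup E] [ContinuousSMul ℝ E]

theorem eventually_nhdsGT_forall_smul_add_mem {F : Set E} (hF : F.Finite) {U : Set E}
    (hU : IsOpen U) {c : E} (hc : c ∈ U) : ∀ᶠ a in 𝓝[>] (0 : ℝ), ∀ x ∈ F, a • x + c ∈ U := by
  refine nhdsWithin_le_nhds <| (eventually_all_finite hF).2 fun x _ => ?_
  have hcont : Continuous fun a : ℝ => a • x + c := by fun_prop
  exact hcont.tendsto' 0 c (by simp) (hU.mem_nhds hc)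

theorem exists_pos_smul_add_mem_of_isMeagre_diff [BaireSpace E] {F U S : Set E}
    (hF : F.Finite) (hU : IsOpen U) (hUne : U.Nonempty) (hres : IsMeagre (U \ S)) :
    ∃ a : ℝ, 0 < a ∧ ∃ b, ∀ x ∈ F, a • x + b ∈ S := by
  obtain ⟨c, hc⟩ := hUne
  obtain ⟨a, hfit, ha⟩ :=
    ((eventually_nhdsGT_forall_smul_add_mem hF hU hc).and self_mem_nhdsWithin).exists
  exact ⟨a, ha, exists_forall_add_mem_of_isMeagre_diff hF (a • ·) hU hres ⟨c, hfit⟩⟩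

end Homothets

theorem Set.OrdConnected.interior_nonempty {α : Type*} [LinearOrder α] [DenselyOrdered α]
    [TopologicalSpace α] [OrderTopology α] {X : Set α} (hX : X.OrdConnected)
    (hXnt : X.Nontrivial) : (interior X).Nonempty := by
  obtain ⟨p, hp, q, hq, hpq⟩ := hXnt.exists_lt
  obtain ⟨c, hc⟩ := exists_between hpq
  exact ⟨c, interior_maximal (Ioo_subset_Icc_self.trans (hX.out hp hq)) isOpen_Ioo hc⟩

/-- Every finite set `F ⊂ ℝ` is universal for the class of sets residual in some interval
of positive length: some positive affine image `a•F + b` of `F` is contained in `S`. -/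
theorem finite_universal_for_residual (F X S : Set ℝ) (hF : F.Finite)
    (hX : X.OrdConnected) (hXnt : X.Nontrivial) (hres : IsMeagre (X \ S)) :
    ∃ a b : ℝ, 0 < a ∧ ∀ x ∈ F, a * x + b ∈ S := by
  obtain ⟨a, ha, b, hb⟩ := exists_pos_smul_add_mem_of_isMeagre_diff hF isOpen_interior
    (hX.interior_nonempty hXnt) (hres.mono (sdiff_subset_sdiff_left interior_subset))
  exact ⟨a, b, ha, hb⟩
end
end

section
/- Every bounded countable set F ⊂ ℝ is universal for the class of sets residual in some interval of positive length: if F ⊂ ℝ is countable and bounded, X ⊆ ℝ is an interval with more than one point, and S ⊆ ℝ is such that X \ S is meager, then there exist a > 0 and b ∈ ℝ such that a·F + b ⊆ S. -/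
/-!
Shrink `F` by a factor `a > 0` until `a • F` is much smaller than an open interval inside `X`.
For each of the countably many `y ∈ a • F`, the translations `b` with `y + b ∉ X \ S` form a
residual set, so by the Baire category theorem some `b` near the centre of the interval works
for all of them at once; then `a • F + b` lies in `X` but misses `X \ S`, hence lies in `S`.
-/

open Set Filter Bornology

theorem eventually_residual_forall_add_mem {G : Type*} [TopologicalSpace G] [AddGroup G]
    [SeparatelyContinuousAdd G] {F T : Set G} (hF : F.Countable) (hT : T ∈ residual G) :
    ∀ᶠ b in residual G, ∀ x ∈ F, x + b ∈ T :=
  (eventually_countable_ball hF).2 fun x _ ↦ by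
    rwa [← (Homeomorph.addLeft x).residual_map_eq] at hT

theorem exists_mem_open_forall_add_mem_of_mem_residual {G : Type*} [TopologicalSpace G]
    [AddGroup G] [SeparatelyContinuousAdd G] [BaireSpace G] {F U T : Set G} (hF : F.Countable)
    (hU : IsOpen U) (hUne : U.Nonempty) (hT : T ∈ residual G) :
    ∃ b ∈ U, ∀ x ∈ F, x + b ∈ T :=
  let ⟨b, hbT, hbU⟩ :=
    (dense_of_mem_residual (eventually_residual_forall_add_mem hF hT)).exists_mem_open hU hUne
  ⟨b, hbU, hbT⟩

theorem Bornology.IsBounded.exists_pos_forall_norm_smul_lt {E : Type*}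
    [SeminormedAddCommGroup E] [NormedSpace ℝ E] {F : Set E} (hF : IsBounded F) {ε : ℝ}
    (hε : 0 < ε) : ∃ a : ℝ, 0 < a ∧ ∀ x ∈ F, ‖a • x‖ < ε := by
  obtain ⟨C, hC⟩ := hF.exists_norm_le
  have hC₁ : 0 < |C| + 1 := by positivity
  refine ⟨ε / (|C| + 1), by positivity, fun x hx ↦ ?_⟩
  calc ‖(ε / (|C| + 1)) • x‖ = ε / (|C| + 1) * ‖x‖ := by
        rw [norm_smul, Real.norm_of_nonneg (by positivity)]
    _ ≤ ε / (|C| + 1) * |C| := by gcongr; exact (hC x hx).trans (le_abs_self C)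
    _ < ε / (|C| + 1) * (|C| + 1) := by gcongr; linarith
    _ = ε := div_mul_cancel₀ ε hC₁.ne'

theorem Set.OrdConnected.exists_ball_subset {X : Set ℝ} (hX : X.OrdConnected)
    (hXnt : X.Nontrivial) : ∃ m r : ℝ, 0 < r ∧ Metric.ball m r ⊆ X := by
  obtain ⟨c, hc, d, hd, hcd⟩ := hXnt.exists_lt
  refine ⟨(c + d) / 2, (d - c) / 2, by linarith, fun y hy ↦ hX.out hc hd ?_⟩
  rw [Metric.mem_ball, Real.dist_eq, abs_lt] at hy
  constructor <;> linarith

/-- Every bounded countable set `F ⊂ ℝ` is universal for the class of sets residual in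
some interval of positive length: some positive affine image `a•F + b` of `F` is
contained in `S`. -/
theorem bounded_countable_universal_for_residual (F X S : Set ℝ) (hFc : F.Countable)
    (hFb : Bornology.IsBounded F) (hX : X.OrdConnected) (hXnt : X.Nontrivial)
    (hres : IsMeagre (X \ S)) :
    ∃ a b : ℝ, 0 < a ∧ ∀ x ∈ F, a * x + b ∈ S := by
  obtain ⟨m, r, hr, hball⟩ := hX.exists_ball_subset hXnt
  obtain ⟨a, ha, haF⟩ := hFb.exists_pos_forall_norm_smul_lt (half_pos hr)
  obtain ⟨b, hbm, hb⟩ := exists_mem_open_forall_add_mem_of_mem_residual (hFc.image (a * ·))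
    Metric.isOpen_ball ⟨m, Metric.mem_ball_self (half_pos hr)⟩ hres
  refine ⟨a, b, ha, fun x hx ↦ ?_⟩
  have hxX : a * x + b ∈ X := hball <| calc
    dist (a * x + b) m ≤ dist (a * x + b) b + dist b m := dist_triangle _ _ _
    _ < r / 2 + r / 2 := by
      rw [dist_add_self_left]
      exact add_lt_add (haF x hx) (Metric.mem_ball.1 hbm)
    _ = r := add_halves r
  by_contra hxS
  exact hb _ (mem_image_of_mem _ hx) ⟨hxX, hxS⟩
end
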